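/- Let V be a real Banach space, A : V → V* a C³ mapping (semilinear form A(u)(v) linear in v), and J : V → ℝ a C³ functional. Suppose u ∈ V satisfies A(u)(v) = 0 for all v ∈ V, and z ∈ V satisfies A'(u)(v, z) = J'(u)(v) for all v ∈ V (adjoint equation). Then for arbitrary ũ, z̃ ∈ V, setting ρ(ũ)(·) = −A(ũ)(·), ρ*(ũ, z̃)(·) = J'(ũ)(·) − A'(ũ)(·, z̃), e = u − ũ, e* = z − z̃, the identity J(u) − J(ũ) = (1/2)ρ(ũ)(z − z̃) + (1/2)ρ*(ũ, z̃)(u − ũ) + ρ(ũ)(z̃) + ℛ⁽³⁾ holds, where ℛ⁽³⁾ = (1/2)∫₀¹ [J'''(ũ + s e)(e,e,e) − A'''(ũ + s e)(e,e,e, z̃ + s e*) − 3 A''(ũ + s e)(e,e, e*)] s(s−1) ds. -/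

import Mathlib

set_option maxHeartbeats 1000000

open intervalIntegral

theorem hasDerivAt_iFD_line {V W : Type*} [NormedAddCommGroup V] [NormedSpace ℝ V]
    [NormedAddCommGroup W] [NormedSpace ℝ W]
    {f : V → W} (hf : ContDiff ℝ 3 f) {k : ℕ} (hk : (k : WithTop ℕ∞) < 3) (u0 e : V) (s : ℝ) :
    HasDerivAt (fun t : ℝ => iteratedFDeriv ℝ k f (u0 + t • e) (fun _ => e))
      (iteratedFDeriv ℝ (k+1) f (u0 + s • e) (fun _ => e)) s := by
  have hx : HasDerivAt (fun t : ℝ => u0 + t • e) e s := by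
    simpa using ((hasDerivAt_id s).smul_const e).const_add u0
  have hΦ : DifferentiableAt ℝ (iteratedFDeriv ℝ k f) (u0 + s • e) :=
    (hf.differentiable_iteratedFDeriv hk).differentiableAt
  have h1 : HasFDerivAt (fun y => iteratedFDeriv ℝ k f y (fun _ => e))
      ((ContinuousMultilinearMap.apply ℝ (fun _ : Fin k => V) W (fun _ => e)).comp
        (fderiv ℝ (iteratedFDeriv ℝ k f) (u0 + s • e))) (u0 + s • e) :=
    ((ContinuousMultilinearMap.apply ℝ (fun _ : Fin k => V) W (fun _ => e)).hasFDerivAt).comp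
      _ hΦ.hasFDerivAt
  have h2 := h1.comp_hasDerivAt s hx
  convert h2 using 1
  · rfl
  · rw [iteratedFDeriv_succ_apply_left]
    rfl

theorem trapezoid_aux (f f' f'' f''' : ℝ → ℝ)
    (h0 : ∀ s, HasDerivAt f (f' s) s)
    (h1 : ∀ s, HasDerivAt f' (f'' s) s)
    (h2 : ∀ s, HasDerivAt f'' (f''' s) s)
    (hc : Continuous f''') :
    f 1 - f 0 = (f' 0 + f' 1)/2 + (1/2) * ∫ s in (0:ℝ)..1, f''' s * (s * (s-1)) := by
  have hcf'' : Continuous f'' := continuous_iff_continuousAt.2 fun s => (h2 s).continuousAt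
  have hcf' : Continuous f' := continuous_iff_continuousAt.2 fun s => (h1 s).continuousAt
  have ibp1 : ∫ s in (0:ℝ)..1, (s^2 - s) * f''' s
      = (1^2-1) * f'' 1 - ((0:ℝ)^2-0) * f'' 0 - ∫ s in (0:ℝ)..1, (2*s-1) * f'' s := by
    apply integral_mul_deriv_eq_deriv_mul (u' := fun s => 2*s - 1)
    · intro x _
      exact ((hasDerivAt_pow 2 x).sub (hasDerivAt_id' x)).congr_deriv (by norm_num)
    · intro x _; exact h2 x
    · exact ((continuous_const.mul continuous_id).sub continuous_const : Continuous fun s : ℝ => 2*s-1).intervalIntegrable 0 1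
    · exact hc.intervalIntegrable 0 1
  have ibp2 : ∫ s in (0:ℝ)..1, (2*s-1) * f'' s
      = (2*1-1) * f' 1 - (2*0-1) * f' 0 - ∫ s in (0:ℝ)..1, 2 * f' s := by
    apply integral_mul_deriv_eq_deriv_mul (u' := fun _ => (2:ℝ))
    · intro x _
      simpa using ((hasDerivAt_id x).const_mul 2).sub_const 1
    · intro x _; exact h1 x
    · exact continuous_const.intervalIntegrable 0 1
    · exact hcf''.intervalIntegrable 0 1
  have ftc : ∫ s in (0:ℝ)..1, f' s = f 1 - f 0 :=
    integral_eq_sub_of_hasDerivAt (fun x _ => h0 x) (hcf'.intervalIntegrable 0 1)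
  have h2' : ∫ s in (0:ℝ)..1, 2 * f' s = 2 * (f 1 - f 0) := by
    rw [intervalIntegral.integral_const_mul, ftc]
  have heq : ∫ s in (0:ℝ)..1, f''' s * (s * (s-1)) = ∫ s in (0:ℝ)..1, (s^2 - s) * f''' s := by
    apply intervalIntegral.integral_congr
    intro x _; ring
  rw [heq, ibp1, ibp2, h2']
  ring

theorem dwr_aux
    {V : Type*} [NormedAddCommGroup V] [NormedSpace ℝ V]
    (A : V → (V →L[ℝ] ℝ)) (hA : ContDiff ℝ 3 A)
    (J : V → ℝ) (hJ : ContDiff ℝ 3 J)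
    (u0 z0 e es : V) :
    (J (u0 + e) - A (u0 + e) (z0 + es)) - (J u0 - A u0 z0) =
      ((fderiv ℝ J u0 e - (fderiv ℝ A u0 e z0 + A u0 es)) +
       (fderiv ℝ J (u0 + e) e - (fderiv ℝ A (u0 + e) e (z0 + es) + A (u0 + e) es)))/2 +
      (1/2) * ∫ s in (0:ℝ)..1,
        (iteratedFDeriv ℝ 3 J (u0 + s • e) (fun _ => e)
         - (iteratedFDeriv ℝ 3 A (u0 + s • e) (fun _ => e) (z0 + s • es)
            + 3 * iteratedFDeriv ℝ 2 A (u0 + s • e) (fun _ => e) es)) * (s * (s - 1)) := by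
  have hy : ∀ s : ℝ, HasDerivAt (fun t : ℝ => z0 + t • es) es s := fun s => by
    simpa using ((hasDerivAt_id s).smul_const es).const_add z0
  -- the four functions
  set f : ℝ → ℝ := fun s =>
    iteratedFDeriv ℝ 0 J (u0 + s • e) (fun _ => e)
    - iteratedFDeriv ℝ 0 A (u0 + s • e) (fun _ => e) (z0 + s • es) with hf
  set f1 : ℝ → ℝ := fun s =>
    iteratedFDeriv ℝ 1 J (u0 + s • e) (fun _ => e)
    - (iteratedFDeriv ℝ 1 A (u0 + s • e) (fun _ => e) (z0 + s • es)
       + iteratedFDeriv ℝ 0 A (u0 + s • e) (fun _ => e) es) with hf1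
  set f2 : ℝ → ℝ := fun s =>
    iteratedFDeriv ℝ 2 J (u0 + s • e) (fun _ => e)
    - (iteratedFDeriv ℝ 2 A (u0 + s • e) (fun _ => e) (z0 + s • es)
       + 2 * iteratedFDeriv ℝ 1 A (u0 + s • e) (fun _ => e) es) with hf2
  set f3 : ℝ → ℝ := fun s =>
    iteratedFDeriv ℝ 3 J (u0 + s • e) (fun _ => e)
    - (iteratedFDeriv ℝ 3 A (u0 + s • e) (fun _ => e) (z0 + s • es)
       + 3 * iteratedFDeriv ℝ 2 A (u0 + s • e) (fun _ => e) es) with hf3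
  have hJ0 := fun s => hasDerivAt_iFD_line hJ (k := 0) (by norm_num) u0 e s
  have hJ1 := fun s => hasDerivAt_iFD_line hJ (k := 1) (by norm_num) u0 e s
  have hJ2 := fun s => hasDerivAt_iFD_line hJ (k := 2) (by norm_num) u0 e s
  have hA0 := fun s => hasDerivAt_iFD_line hA (k := 0) (by norm_num) u0 e s
  have hA1 := fun s => hasDerivAt_iFD_line hA (k := 1) (by norm_num) u0 e s
  have hA2 := fun s => hasDerivAt_iFD_line hA (k := 2) (by norm_num) u0 e s
  have hAe : ∀ (k : ℕ), (k : WithTop ℕ∞) < 3 → ∀ s : ℝ,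
      HasDerivAt (fun t : ℝ => iteratedFDeriv ℝ k A (u0 + t • e) (fun _ => e) es)
        (iteratedFDeriv ℝ (k+1) A (u0 + s • e) (fun _ => e) es) s := by
    intro k hk s
    simpa using (hasDerivAt_iFD_line hA hk u0 e s).clm_apply (hasDerivAt_const s es)
  have hd0 : ∀ s, HasDerivAt f (f1 s) s := fun s =>
    (hJ0 s).sub ((hA0 s).clm_apply (hy s))
  have hd1 : ∀ s, HasDerivAt f1 (f2 s) s := by
    intro s
    have h := (hJ1 s).sub (((hA1 s).clm_apply (hy s)).add (hAe 0 (by norm_num) s))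
    refine h.congr_deriv ?_
    simp only [hf2]
    ring
  have hd2 : ∀ s, HasDerivAt f2 (f3 s) s := by
    intro s
    have h := (hJ2 s).sub (((hA2 s).clm_apply (hy s)).add
      ((hAe 1 (by norm_num) s).const_mul 2))
    refine h.congr_deriv ?_
    simp only [hf3]
    ring
  have hxc : Continuous (fun s : ℝ => u0 + s • e) := continuous_const.add (continuous_id.smul continuous_const)
  have hyc : Continuous (fun s : ℝ => z0 + s • es) := continuous_const.add (continuous_id.smul continuous_const)
  have hc : Continuous f3 := by
    have cJ : Continuous fun s : ℝ => iteratedFDeriv ℝ 3 J (u0 + s • e) (fun _ => e) :=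
      ((ContinuousMultilinearMap.apply ℝ (fun _ : Fin 3 => V) ℝ (fun _ => e)).continuous).comp
        ((hJ.continuous_iteratedFDeriv le_rfl).comp hxc)
    have cA3 : Continuous fun s : ℝ => iteratedFDeriv ℝ 3 A (u0 + s • e) (fun _ => e) :=
      ((ContinuousMultilinearMap.apply ℝ (fun _ : Fin 3 => V) (V →L[ℝ] ℝ)
          (fun _ => e)).continuous).comp
        ((hA.continuous_iteratedFDeriv le_rfl).comp hxc)
    have cA2 : Continuous fun s : ℝ => iteratedFDeriv ℝ 2 A (u0 + s • e) (fun _ => e) :=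
      ((ContinuousMultilinearMap.apply ℝ (fun _ : Fin 2 => V) (V →L[ℝ] ℝ)
          (fun _ => e)).continuous).comp
        ((hA.continuous_iteratedFDeriv (by norm_num)).comp hxc)
    exact cJ.sub ((cA3.clm_apply hyc).add (continuous_const.mul (cA2.clm_apply continuous_const)))
  have key := trapezoid_aux f f1 f2 f3 hd0 hd1 hd2 hc
  simp only [hf, hf1, hf3, zero_smul, one_smul, add_zero, iteratedFDeriv_zero_apply,
    iteratedFDeriv_one_apply] at key
  convert key using 2

theorem dwr_error_representation
    {V : Type*} [NormedAddCommGroup V] [NormedSpace ℝ V] [CompleteSpace V]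
    (A : V → (V →L[ℝ] ℝ)) (hA : ContDiff ℝ 3 A)
    (J : V → ℝ) (hJ : ContDiff ℝ 3 J)
    (u z : V)
    (hu : ∀ v : V, A u v = 0)
    (hz : ∀ v : V, fderiv ℝ A u v z = fderiv ℝ J u v)
    (utilde ztilde : V) :
    J u - J utilde =
      (1/2) * (-(A utilde (z - ztilde))) +
      (1/2) * (fderiv ℝ J utilde (u - utilde) - fderiv ℝ A utilde (u - utilde) ztilde) +
      (-(A utilde ztilde)) +
      (1/2) * ∫ s in (0:ℝ)..1,
        (iteratedFDeriv ℝ 3 J (utilde + s • (u - utilde))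
            ![u - utilde, u - utilde, u - utilde]
         - iteratedFDeriv ℝ 3 A (utilde + s • (u - utilde))
            ![u - utilde, u - utilde, u - utilde] (ztilde + s • (z - ztilde))
         - 3 * iteratedFDeriv ℝ 2 A (utilde + s • (u - utilde))
            ![u - utilde, u - utilde] (z - ztilde)) * (s * (s - 1)) := by
  have hv3 : (![u - utilde, u - utilde, u - utilde] : Fin 3 → V) = fun _ => u - utilde := by
    funext i; fin_cases i <;> rfl
  have hv2 : (![u - utilde, u - utilde] : Fin 2 → V) = fun _ => u - utilde := by
    funext i; fin_cases i <;> rfl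
  have key := dwr_aux A hA J hJ utilde ztilde (u - utilde) (z - ztilde)
  rw [show utilde + (u - utilde) = u from by abel,
      show ztilde + (z - ztilde) = z from by abel] at key
  rw [hu z, hu (z - ztilde), hz (u - utilde)] at key
  have hint : (∫ s in (0:ℝ)..1,
        (iteratedFDeriv ℝ 3 J (utilde + s • (u - utilde))
            ![u - utilde, u - utilde, u - utilde]
         - iteratedFDeriv ℝ 3 A (utilde + s • (u - utilde))
            ![u - utilde, u - utilde, u - utilde] (ztilde + s • (z - ztilde))
         - 3 * iteratedFDeriv ℝ 2 A (utilde + s • (u - utilde))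
            ![u - utilde, u - utilde] (z - ztilde)) * (s * (s - 1)))
      = ∫ s in (0:ℝ)..1,
        (iteratedFDeriv ℝ 3 J (utilde + s • (u - utilde)) (fun _ => u - utilde)
         - (iteratedFDeriv ℝ 3 A (utilde + s • (u - utilde)) (fun _ => u - utilde)
              (ztilde + s • (z - ztilde))
            + 3 * iteratedFDeriv ℝ 2 A (utilde + s • (u - utilde)) (fun _ => u - utilde)
                (z - ztilde))) * (s * (s - 1)) := by
    apply intervalIntegral.integral_congr
    intro s _
    rw [hv3, hv2]
    ring
  rw [hint]
  linarith [key]
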